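/- arXiv:1702.08440 — 4 statements merged into one kernel-verified Lean document; each statement's English description precedes it below -/
import Mathlib

section
/- q-Mellin inversion: let f be defined on the q-lattice {q^n : n∈ℤ} with q-Mellin transform M_q(f) absolutely convergent on a strip α < Re(s) < β, and let c ∈ (α, β) be real. Then for every x = q^m in the q-lattice, f(x) = (log q)/(2πi(1-q)) · ∫_{c - iπ/log q}^{c + iπ/log q} M_q(f)(s) x^{-s} ds. -/
/-!
On the line `Re s = c` the integrand `t ↦ M_q(f)(c + it) q^{-m(c + it)}` is an absolutely
convergent Fourier series of period `2π / |log q|`, with `n`-th coefficient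
`(1 - q) f(q^n) q^{(n - m)c}`: the exponentials `q^{(n - m)it} = exp((n - m) it log q)` are
`2π / log q`-periodic. Integrating term by term over one period (dominated convergence, the
coefficients being summable by the hypothesis at `s = c`) kills every term except `n = m`.
-/

open Complex Filter

noncomputable def qPochInf (a : ℂ) (q : ℝ) : ℂ := ∏' k : ℕ, (1 - a * (q : ℂ) ^ k)

noncomputable def qPoch (a : ℂ) (q : ℝ) (n : ℕ) : ℂ := ∏ k ∈ Finset.range n, (1 - a * (q : ℂ) ^ k)

noncomputable def qGamma (q : ℝ) (s : ℂ) : ℂ :=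
  qPochInf (q : ℂ) q / qPochInf ((q : ℂ) ^ s) q * ((1 : ℂ) - (q : ℂ)) ^ (1 - s)

noncomputable def Kq (q : ℝ) (s : ℂ) : ℂ :=
  qPochInf (-(q : ℂ)) q * qPochInf (-1) q * qPochInf (q : ℂ) q /
    (qPochInf (-(q : ℂ) ^ s) q * qPochInf (-(q : ℂ) ^ (1 - s)) q)

noncomputable def qMellin (q : ℝ) (f : ℝ → ℂ) (s : ℂ) : ℂ :=
  (1 - (q : ℂ)) * ∑' n : ℤ, f (q ^ n) * (q : ℂ) ^ ((n : ℂ) * s)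

noncomputable def qFact (q : ℝ) (n : ℕ) : ℂ := qPoch (q : ℂ) q n / ((1 : ℂ) - (q : ℂ)) ^ n

open scoped Real

section FourierCoefficient

variable {ω : ℝ}

theorem integral_exp_int_mul_mul_I_eq_zero (hω : ω ≠ 0) {k : ℤ} (hk : k ≠ 0) :
    ∫ t in -(π / ω)..π / ω, cexp (k * ω * t * I) = 0 := by
  have hω' : (ω : ℂ) ≠ 0 := by exact_mod_cast hω
  have hkω : (k * ω * I : ℂ) ≠ 0 := by simp [hk, hω, I_ne_zero]
  simp_rw [show ∀ t : ℝ, (k * ω * t * I : ℂ) = k * ω * I * t from fun t => by ring]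
  rw [integral_exp_mul_complex hkω, div_eq_zero_iff, sub_eq_zero]
  left
  -- the endpoints differ by one period `2π / ω`
  have hperiod : (k * ω * I * ↑(π / ω) : ℂ) = k * ω * I * ↑(-(π / ω)) + k * (2 * π * I) := by
    push_cast
    field_simp
    ring
  rw [hperiod, Complex.exp_add, exp_int_mul_two_pi_mul_I, mul_one]

theorem norm_mul_exp_int_mul_mul_I (z : ℂ) (k : ℤ) (t : ℝ) :
    ‖z * cexp (k * ω * t * I)‖ = ‖z‖ := by
  rw [norm_mul, show (k * ω * t * I : ℂ) = ((k * ω * t : ℝ) : ℂ) * I by push_cast; ring,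
    norm_exp_ofReal_mul_I, mul_one]

theorem integral_tsum_mul_exp_mul_exp_neg (a : ℤ → ℂ) (ha : Summable fun n => ‖a n‖)
    (hω : ω ≠ 0) (m : ℤ) :
    ∫ t in -(π / ω)..π / ω, (∑' n : ℤ, a n * cexp (n * ω * t * I)) * cexp (-m * ω * t * I) =
      (2 * π / ω : ℝ) * a m := by
  set F : ℤ → ℝ → ℂ := fun n t => a n * cexp ((n - m : ℤ) * ω * t * I)
  have hF : ∀ n (t : ℝ), a n * cexp (n * ω * t * I) * cexp (-m * ω * t * I) = F n t := by
    intro n t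
    rw [mul_assoc, ← Complex.exp_add]
    simp only [F]
    congr 2
    push_cast
    ring
  have hnormF : ∀ n t, ‖F n t‖ = ‖a n‖ := fun n t => norm_mul_exp_int_mul_mul_I _ _ t
  have hsum : HasSum (fun n => ∫ t in -(π / ω)..π / ω, F n t)
      (∫ t in -(π / ω)..π / ω, (∑' n : ℤ, a n * cexp (n * ω * t * I)) * cexp (-m * ω * t * I)) := by
    refine intervalIntegral.hasSum_integral_of_dominated_convergence (fun n _ => ‖a n‖)
      (fun n => by fun_prop) (fun n => Eventually.of_forall fun t _ => (hnormF n t).le)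
      (Eventually.of_forall fun _ _ => ha) intervalIntegrable_const (Eventually.of_forall fun t _ => ?_)
    have hterm : Summable fun n : ℤ => a n * cexp (n * ω * t * I) :=
      Summable.of_norm (ha.congr fun n => (norm_mul_exp_int_mul_mul_I _ _ t).symm)
    simpa only [hF] using hterm.hasSum.mul_right (cexp (-m * ω * t * I))
  have hterms : (fun n => ∫ t in -(π / ω)..π / ω, F n t) =
      fun n => if n = m then ((2 * π / ω : ℝ) : ℂ) * a m else 0 := by
    ext n
    split_ifs with hnm
    · subst hnm
      simp only [F, sub_self, Int.cast_zero, zero_mul, Complex.exp_zero, mul_one,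
        intervalIntegral.integral_const, Complex.real_smul]
      push_cast
      ring
    · rw [intervalIntegral.integral_const_mul,
        integral_exp_int_mul_mul_I_eq_zero hω (sub_ne_zero.mpr hnm), mul_zero]
  rw [hterms] at hsum
  exact hsum.unique (hasSum_ite_eq m _)

end FourierCoefficient

theorem ofReal_cpow_mul_add_mul_I {q : ℝ} (hq : 0 < q) (x : ℂ) (c t : ℝ) :
    (q : ℂ) ^ (x * (c + t * I)) = (q : ℂ) ^ (x * c) * cexp (x * Real.log q * t * I) := by
  have hq0 : (q : ℂ) ≠ 0 := by exact_mod_cast hq.ne'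
  rw [cpow_def_of_ne_zero hq0, cpow_def_of_ne_zero hq0, ← Complex.exp_add, ← ofReal_log hq.le]
  ring_nf

theorem qMellin_eq_tsum_mul_exp {q : ℝ} (hq : 0 < q) (f : ℝ → ℂ) (c t : ℝ) :
    qMellin q f (c + t * I) = ∑' n : ℤ, (1 - (q : ℂ)) * f (q ^ n) * (q : ℂ) ^ ((n : ℂ) * c) *
      cexp (n * Real.log q * t * I) := by
  rw [qMellin, ← tsum_mul_left]
  congr 1 with n
  rw [ofReal_cpow_mul_add_mul_I hq]
  ring

theorem qMellin_inversion_general (q α β : ℝ) (hq : 0 < q) (hq1 : q < 1) (f : ℝ → ℂ)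
    (habs : ∀ s : ℂ, α < s.re → s.re < β →
      Summable (fun n : ℤ => ‖f (q ^ n) * (q : ℂ) ^ ((n : ℂ) * s)‖))
    (c : ℝ) (hc : α < c) (hcb : c < β) :
    ∀ m : ℤ, f (q ^ m) = (Real.log q : ℂ) / (2 * (Real.pi : ℂ) * I * (1 - (q : ℂ))) *
      (I * ∫ t in (-(Real.pi / Real.log q))..(Real.pi / Real.log q),
        qMellin q f ((c : ℂ) + (t : ℂ) * I) * (q : ℂ) ^ (-(m : ℂ) * ((c : ℂ) + (t : ℂ) * I))) := by
  intro m
  have hL : Real.log q ≠ 0 := (Real.log_neg hq hq1).ne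
  have hL' : (Real.log q : ℂ) ≠ 0 := by exact_mod_cast hL
  have hq1' : (1 : ℂ) - q ≠ 0 := sub_ne_zero.mpr (by exact_mod_cast hq1.ne')
  have hqc : (q : ℂ) ^ (-((m : ℂ) * c)) * (q : ℂ) ^ ((m : ℂ) * c) = 1 := by
    rw [cpow_neg, inv_mul_cancel₀ (cpow_ne_zero_iff.mpr (Or.inl (by exact_mod_cast hq.ne')))]
  set a : ℤ → ℂ := fun n => (1 - (q : ℂ)) * f (q ^ n) * (q : ℂ) ^ ((n : ℂ) * c)
  have ha : Summable fun n => ‖a n‖ :=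
    ((habs c (by simpa using hc) (by simpa using hcb)).mul_left ‖1 - (q : ℂ)‖).congr fun n => by
      simp only [a, norm_mul, mul_assoc]
  have hintegrand : ∀ t : ℝ, qMellin q f (c + t * I) * (q : ℂ) ^ (-(m : ℂ) * (c + t * I)) =
      (q : ℂ) ^ (-(m : ℂ) * c) *
        ((∑' n : ℤ, a n * cexp (n * Real.log q * t * I)) * cexp (-m * Real.log q * t * I)) := by
    intro t
    rw [qMellin_eq_tsum_mul_exp hq, ofReal_cpow_mul_add_mul_I hq]
    ring
  simp_rw [hintegrand, intervalIntegral.integral_const_mul,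
    integral_tsum_mul_exp_mul_exp_neg a ha hL m, a]
  push_cast
  field_simp
  linear_combination (-f (q ^ m)) * hqc

theorem qMellin_inversion (q α β : ℝ) (hq : 0 < q) (hq1 : q < 1) (hab : α < β) (f : ℝ → ℂ)
    (habs : ∀ s : ℂ, α < s.re → s.re < β →
      Summable (fun n : ℤ => ‖f (q ^ n) * (q : ℂ) ^ ((n : ℂ) * s)‖))
    (c : ℝ) (hc : α < c) (hcb : c < β) :
    ∀ m : ℤ, f (q ^ m) = (Real.log q : ℂ) / (2 * (Real.pi : ℂ) * I * (1 - (q : ℂ))) *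
      (I * ∫ t in (-(Real.pi / Real.log q))..(Real.pi / Real.log q),
        qMellin q f ((c : ℂ) + (t : ℂ) * I) * (q : ℂ) ^ (-(m : ℂ) * ((c : ℂ) + (t : ℂ) * I))) :=
  qMellin_inversion_general q α β hq hq1 f habs c hc hcb
end

section
/- Characterization of q-Mellin transforms: let a < b be reals and F analytic on the strip a < Re(s) < b and periodic with period 2πi/log q. Define f on the q-lattice by f(q^n) = (log q)/(2πi(1-q)) ∫_{c-iπ/log q}^{c+iπ/log q} F(s) q^{-ns} ds for some fixed c ∈ (a,b). Then f is independent of the choice of c, and M_q(f)(s) = F(s) for all s in the strip a < Re(s) < b. -/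
open Complex Filter

/-!
On a vertical line `Re s = c` in the strip, `t ↦ F (c + t i)` is periodic with period
`2π / |log q|`, and `(1 - q) q^{nc} f(q^n)` is its `(-n)`-th Fourier coefficient; so
`M_q(f)(s) = F(s)` is Fourier inversion at `t = Im s`, once the coefficients are summable.
Cauchy's theorem on a rectangle one period high, whose horizontal sides cancel by periodicity,
shows that `f` does not depend on `c`. Computing the coefficients on the lines `c ± ε` instead
then bounds them by `O(q^{ε |n|})`, which gives summability.
-/

open scoped Real
open Set

theorem norm_fourierCoeffOn_le {E : Type*} [NormedAddCommGroup E] [NormedSpace ℂ E]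
    {a b : ℝ} (hab : a < b) {g : ℝ → E} {M : ℝ} (hM : ∀ x ∈ Icc a b, ‖g x‖ ≤ M) (n : ℤ) :
    ‖fourierCoeffOn hab g n‖ ≤ M := by
  have hba : 0 < b - a := sub_pos.2 hab
  have hint : ‖∫ x in a..b, fourier (-n) (x : AddCircle (b - a)) • g x‖ ≤ M * |b - a| :=
    intervalIntegral.norm_integral_le_of_norm_le_const fun x hx => by
      rw [norm_smul, fourier_apply, Circle.norm_coe, one_mul]
      exact hM x (Ioc_subset_Icc_self (uIoc_of_le hab.le ▸ hx))
  rw [fourierCoeffOn_eq_integral, norm_smul, Real.norm_eq_abs, abs_of_pos (one_div_pos.2 hba)]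
  calc 1 / (b - a) * ‖∫ x in a..b, fourier (-n) (x : AddCircle (b - a)) • g x‖
      ≤ 1 / (b - a) * (M * |b - a|) := by gcongr
    _ = M := by rw [abs_of_pos hba]; field_simp

theorem Function.Periodic.hasSum_fourier_series_of_summable {a b : ℝ} (hab : a < b) {g : ℝ → ℂ}
    (hg : Continuous g) (hper : Function.Periodic g (b - a))
    (hsum : Summable (fourierCoeffOn hab g)) (x : ℝ) :
    HasSum (fun n => fourierCoeffOn hab g n * fourier n (x : AddCircle (b - a))) (g x) := by
  have := Fact.mk (sub_pos.2 hab)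
  let φ : C(AddCircle (b - a), ℂ) :=
    ⟨hper.lift, (QuotientAddGroup.isQuotientMap_mk _).continuous_iff.2 hg⟩
  have hcoeff : fourierCoeff φ = fourierCoeffOn hab g := by
    ext n
    rw [fourierCoeffOn_eq_integral, fourierCoeff_eq_intervalIntegral _ _ a, add_sub_cancel]
    simp only [φ, ContinuousMap.coe_mk, hper.lift_coe]
  have h := has_pointwise_sum_fourier_series_of_summable (f := φ) (hcoeff ▸ hsum) x
  rw [hcoeff] at h
  exact h

theorem summable_int_of_norm_le_rpow {E : Type*} [NormedAddCommGroup E] [CompleteSpace E]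
    {u : ℤ → E} {q α β C₁ C₂ : ℝ} (hq : 0 < q) (hq1 : q < 1) (hα : 0 < α) (hβ : β < 0)
    (h₁ : ∀ n : ℤ, ‖u n‖ ≤ C₁ * q ^ (α * n)) (h₂ : ∀ n : ℤ, ‖u n‖ ≤ C₂ * q ^ (β * n)) :
    Summable u := by
  refine Summable.of_nat_of_neg ?_ ?_
  · refine Summable.of_norm_bounded ((summable_geometric_of_lt_one (by positivity)
      (Real.rpow_lt_one hq.le hq1 hα)).mul_left C₁) fun k => ?_
    simpa [← Real.rpow_mul_natCast hq.le] using h₁ k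
  · refine Summable.of_norm_bounded ((summable_geometric_of_lt_one (by positivity)
      (Real.rpow_lt_one hq.le hq1 (neg_pos.2 hβ))).mul_left C₂) fun k => ?_
    simpa [← Real.rpow_mul_natCast hq.le] using h₂ (-k)

theorem integral_vertical_eq_of_periodic {F : ℂ → ℂ} {a b P c₁ c₂ : ℝ}
    (hF : DifferentiableOn ℂ F (re ⁻¹' Ioo a b))
    (hper : ∀ z ∈ re ⁻¹' Ioo a b, F (z + P * I) = F z)
    (hc₁ : c₁ ∈ Ioo a b) (hc₂ : c₂ ∈ Ioo a b) (t₀ : ℝ) :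
    ∫ t in t₀..t₀ + P, F (c₁ + t * I) = ∫ t in t₀..t₀ + P, F (c₂ + t * I) := by
  have hsub : uIcc c₁ c₂ ⊆ Ioo a b := ordConnected_Ioo.uIcc_subset hc₁ hc₂
  have hrect := integral_boundary_rect_eq_zero_of_differentiableOn F (c₁ + t₀ * I)
    (c₂ + (t₀ + P) * I) (hF.mono fun z hz => hsub (by simpa using hz.1))
  have hhoriz : ∫ x in c₁..c₂, F (x + (t₀ + P : ℝ) * I) = ∫ x in c₁..c₂, F (x + t₀ * I) :=
    intervalIntegral.integral_congr fun x hx => by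
      simpa [add_mul, add_assoc] using hper (x + t₀ * I) (by simpa using hsub hx)
  simp only [add_re, ofReal_re, mul_re, I_re, mul_zero, ofReal_im, I_im, mul_one, sub_self,
    add_zero, add_im, mul_im, zero_add] at hrect
  rw [hhoriz, sub_self, zero_add, sub_eq_zero, smul_eq_mul, smul_eq_mul] at hrect
  exact (mul_left_cancel₀ I_ne_zero hrect).symm

theorem continuous_vertical_line {F : ℂ → ℂ} {a b c : ℝ} (hF : ContinuousOn F (re ⁻¹' Ioo a b))
    (hc : c ∈ Ioo a b) : Continuous fun t : ℝ => F (c + t * I) :=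
  hF.comp_continuous (by fun_prop) fun t => by simpa using hc

noncomputable def qMellinInv (q : ℝ) (F : ℂ → ℂ) (c : ℝ) (n : ℤ) : ℂ :=
  (Real.log q : ℂ) / (2 * (Real.pi : ℂ) * I * (1 - (q : ℂ))) *
    (I * ∫ t in (-(Real.pi / Real.log q))..(Real.pi / Real.log q),
      F ((c : ℂ) + (t : ℂ) * I) * (q : ℂ) ^ (-(n : ℂ) * ((c : ℂ) + (t : ℂ) * I)))

section qMellin

variable {q a b : ℝ} {F : ℂ → ℂ}

theorem cpow_add_int_mul_two_pi_I_div_log (hq : 0 < q) (hq1 : q ≠ 1) (w : ℂ) (n : ℤ) :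
    (q : ℂ) ^ (w + n * (2 * π * I / Real.log q)) = (q : ℂ) ^ w := by
  have hL : (Real.log q : ℂ) ≠ 0 := ofReal_ne_zero.2 (Real.log_ne_zero_of_pos_of_ne_one hq hq1)
  have hperiod : (q : ℂ) ^ (n * (2 * π * I / Real.log q)) = 1 := by
    rw [cpow_def_of_ne_zero (ofReal_ne_zero.2 hq.ne'), ← ofReal_log hq.le,
      show (Real.log q : ℂ) * (n * (2 * π * I / Real.log q)) = n * (2 * π * I) by field_simp]
    exact exp_int_mul_two_pi_mul_I n
  rw [cpow_add _ _ (ofReal_ne_zero.2 hq.ne'), hperiod, mul_one]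

theorem fourier_coe_eq_cpow (hq : 0 < q) (hq1 : q ≠ 1) (n : ℤ) (x : ℝ) :
    (fourier n (x : AddCircle (-(π / Real.log q) - π / Real.log q)) : ℂ) =
      (q : ℂ) ^ (-(n : ℂ) * x * I) := by
  have hL : (Real.log q : ℂ) ≠ 0 := ofReal_ne_zero.2 (Real.log_ne_zero_of_pos_of_ne_one hq hq1)
  rw [fourier_coe_apply, cpow_def_of_ne_zero (ofReal_ne_zero.2 hq.ne'), ← ofReal_log hq.le]
  congr 1
  push_cast
  field_simp
  ring

theorem pi_div_log_lt_neg (hq : 0 < q) (hq1 : q < 1) :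
    π / Real.log q < -(π / Real.log q) := by
  have := div_neg_of_pos_of_neg Real.pi_pos (Real.log_neg hq hq1)
  linarith

theorem qMellinInv_eq_of_mem_strip {c₁ c₂ : ℝ} (hq : 0 < q) (hq1 : q ≠ 1)
    (hF : DifferentiableOn ℂ F (re ⁻¹' Ioo a b))
    (hper : ∀ z ∈ re ⁻¹' Ioo a b, F (z + 2 * π * I / Real.log q) = F z)
    (hc₁ : c₁ ∈ Ioo a b) (hc₂ : c₂ ∈ Ioo a b) (n : ℤ) :
    qMellinInv q F c₁ n = qMellinInv q F c₂ n := by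
  have hperiod : ((2 * π / Real.log q : ℝ) : ℂ) * I = 2 * π * I / Real.log q := by
    push_cast; ring
  have hdiff : DifferentiableOn ℂ (fun z => F z * (q : ℂ) ^ (-(n : ℂ) * z)) (re ⁻¹' Ioo a b) :=
    hF.mul fun z _ => ((differentiableAt_id.const_mul _).const_cpow
      (Or.inl (ofReal_ne_zero.2 hq.ne'))).differentiableWithinAt
  have hshift := integral_vertical_eq_of_periodic hdiff (fun z hz => by
      rw [hperiod, hper z hz, mul_add, ← Int.cast_neg,
        cpow_add_int_mul_two_pi_I_div_log hq hq1]) hc₁ hc₂ (-(π / Real.log q))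
  rw [show -(π / Real.log q) + 2 * π / Real.log q = π / Real.log q by ring] at hshift
  rw [qMellinInv, qMellinInv, hshift]

/- Since `log q < 0`, the integral in `qMellinInv` runs downwards; the Fourier coefficients are
taken on `[π / log q, -(π / log q)]`, an interval of length `2π / |log q|`. -/
theorem qMellinInv_eq_fourierCoeffOn (hq : 0 < q) (hq1 : q < 1) (c : ℝ) (n : ℤ) :
    qMellinInv q F c n = (q : ℂ) ^ (-(n : ℂ) * c) / (1 - q) *
      fourierCoeffOn (pi_div_log_lt_neg hq hq1) (fun t : ℝ => F (c + t * I)) (-n) := by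
  have hL : (Real.log q : ℂ) ≠ 0 := ofReal_ne_zero.2 (Real.log_neg hq hq1).ne
  have hq1' : (1 - q : ℂ) ≠ 0 := sub_ne_zero.2 (ofReal_ne_one.2 hq1.ne).symm
  have hintegrand : ∀ t : ℝ, F (c + t * I) * (q : ℂ) ^ (-(n : ℂ) * (c + t * I)) =
      (q : ℂ) ^ (-(n : ℂ) * c) *
        (fourier n (t : AddCircle (-(π / Real.log q) - π / Real.log q)) • F (c + t * I)) := by
    intro t
    rw [fourier_coe_eq_cpow hq hq1.ne, smul_eq_mul, mul_add, cpow_add _ _ (ofReal_ne_zero.2 hq.ne'),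
      mul_assoc]
    ring
  rw [qMellinInv, fourierCoeffOn_eq_integral, neg_neg,
    intervalIntegral.integral_congr fun t _ => hintegrand t, intervalIntegral.integral_const_mul,
    intervalIntegral.integral_symm, real_smul]
  push_cast
  field_simp
  ring

theorem norm_fourierCoeffOn_vertical_le {c c' : ℝ} (hq : 0 < q) (hq1 : q < 1)
    (hF : DifferentiableOn ℂ F (re ⁻¹' Ioo a b))
    (hper : ∀ z ∈ re ⁻¹' Ioo a b, F (z + 2 * π * I / Real.log q) = F z)
    (hc : c ∈ Ioo a b) (hc' : c' ∈ Ioo a b) :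
    ∃ M, ∀ m : ℤ, ‖fourierCoeffOn (pi_div_log_lt_neg hq hq1) (fun t : ℝ => F (c + t * I)) m‖ ≤
      M * q ^ ((c' - c) * m) := by
  obtain ⟨M, hM⟩ := (isCompact_Icc (a := π / Real.log q) (b := -(π / Real.log q)))
    |>.exists_bound_of_continuousOn (continuous_vertical_line hF.continuousOn hc').continuousOn
  refine ⟨M, fun m => ?_⟩
  have h := congrArg norm (qMellinInv_eq_of_mem_strip hq hq1.ne hF hper hc hc' (-m))
  rw [qMellinInv_eq_fourierCoeffOn hq hq1, qMellinInv_eq_fourierCoeffOn hq hq1, neg_neg] at h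
  simp only [norm_mul, norm_div, norm_cpow_eq_rpow_re_of_pos hq] at h
  have hre : ∀ x : ℝ, (-((-m : ℤ) : ℂ) * x).re = m * x := fun x => by simp
  have hK : 0 < ‖(1 - q : ℂ)‖ := norm_pos_iff.2 (sub_ne_zero.2 (ofReal_ne_one.2 hq1.ne).symm)
  rw [hre, hre] at h
  have hcoeff : ‖fourierCoeffOn (pi_div_log_lt_neg hq hq1) (fun t : ℝ => F (c + t * I)) m‖ =
      q ^ ((c' - c) * m) *
        ‖fourierCoeffOn (pi_div_log_lt_neg hq hq1) (fun t : ℝ => F (c' + t * I)) m‖ := by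
    rw [div_mul_eq_mul_div, div_mul_eq_mul_div, div_left_inj' hK.ne'] at h
    rw [show (c' - c) * m = m * c' - m * c by ring, Real.rpow_sub hq, div_mul_eq_mul_div,
      eq_div_iff (Real.rpow_pos_of_pos hq _).ne', mul_comm, h]
  rw [hcoeff, mul_comm M]
  exact mul_le_mul_of_nonneg_left (norm_fourierCoeffOn_le _ hM m) (by positivity)

theorem summable_fourierCoeffOn_vertical {c : ℝ} (hq : 0 < q) (hq1 : q < 1)
    (hF : DifferentiableOn ℂ F (re ⁻¹' Ioo a b))
    (hper : ∀ z ∈ re ⁻¹' Ioo a b, F (z + 2 * π * I / Real.log q) = F z) (hc : c ∈ Ioo a b) :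
    Summable (fourierCoeffOn (pi_div_log_lt_neg hq hq1) fun t : ℝ => F (c + t * I)) := by
  have ⟨hac, hcb⟩ := hc
  obtain ⟨M₁, hM₁⟩ := norm_fourierCoeffOn_vertical_le (c' := (a + c) / 2) hq hq1 hF hper hc
    ⟨by linarith, by linarith⟩
  obtain ⟨M₂, hM₂⟩ := norm_fourierCoeffOn_vertical_le (c' := (c + b) / 2) hq hq1 hF hper hc
    ⟨by linarith, by linarith⟩
  exact summable_int_of_norm_le_rpow hq hq1 (by linarith) (by linarith) hM₂ hM₁

theorem hasSum_qMellin_qMellinInv (hq : 0 < q) (hq1 : q < 1)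
    (hF : DifferentiableOn ℂ F (re ⁻¹' Ioo a b))
    (hper : ∀ z ∈ re ⁻¹' Ioo a b, F (z + 2 * π * I / Real.log q) = F z) {s : ℂ}
    (hs : s.re ∈ Ioo a b) :
    HasSum (fun n : ℤ => (1 - (q : ℂ)) * (qMellinInv q F s.re n * (q : ℂ) ^ ((n : ℂ) * s)))
      (F s) := by
  have hL : (Real.log q : ℂ) ≠ 0 := ofReal_ne_zero.2 (Real.log_neg hq hq1).ne
  have hq1' : (1 - q : ℂ) ≠ 0 := sub_ne_zero.2 (ofReal_ne_one.2 hq1.ne).symm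
  have hperiodic : Function.Periodic (fun t : ℝ => F (s.re + t * I))
      (-(π / Real.log q) - π / Real.log q) := fun t => by
    dsimp only
    rw [← hper (s.re + (t + (-(π / Real.log q) - π / Real.log q) : ℝ) * I) (by simpa using hs)]
    congr 1
    push_cast
    field_simp
    ring
  have h := hperiodic.hasSum_fourier_series_of_summable (pi_div_log_lt_neg hq hq1)
    (continuous_vertical_line hF.continuousOn hs)
    (summable_fourierCoeffOn_vertical hq hq1 hF hper hs) s.im
  rw [← (Equiv.neg ℤ).hasSum_iff, re_add_im] at h
  convert h using 2 with n
  rw [Function.comp_apply, Equiv.neg_apply, qMellinInv_eq_fourierCoeffOn hq hq1,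
    fourier_coe_eq_cpow hq hq1.ne]
  have hcpow : (q : ℂ) ^ (-(n : ℂ) * s.re) * (q : ℂ) ^ ((n : ℂ) * s) =
      (q : ℂ) ^ (-((-n : ℤ) : ℂ) * s.im * I) := by
    rw [← cpow_add _ _ (ofReal_ne_zero.2 hq.ne')]
    congr 1
    push_cast
    linear_combination (-(n : ℂ)) * re_add_im s
  rw [← hcpow]
  generalize fourierCoeffOn (E := ℂ) _ _ (-n) = X
  field_simp

end qMellin

theorem qMellin_characterization_general (q a b : ℝ) (hq : 0 < q) (hq1 : q < 1)
    (F : ℂ → ℂ) (hF : DifferentiableOn ℂ F {s : ℂ | a < s.re ∧ s.re < b})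
    (hper : ∀ s : ℂ, a < s.re → s.re < b → F (s + 2 * Real.pi * I / Real.log q) = F s)
    (c : ℝ) (hc : a < c) (hcb : c < b) (f : ℝ → ℂ)
    (hf : ∀ n : ℤ, f (q ^ n) = (Real.log q : ℂ) / (2 * (Real.pi : ℂ) * I * (1 - (q : ℂ))) *
      (I * ∫ t in (-(Real.pi / Real.log q))..(Real.pi / Real.log q),
        F ((c : ℂ) + (t : ℂ) * I) * (q : ℂ) ^ (-(n : ℂ) * ((c : ℂ) + (t : ℂ) * I)))) :
    (∀ c' : ℝ, a < c' → c' < b → ∀ n : ℤ,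
      f (q ^ n) = (Real.log q : ℂ) / (2 * (Real.pi : ℂ) * I * (1 - (q : ℂ))) *
        (I * ∫ t in (-(Real.pi / Real.log q))..(Real.pi / Real.log q),
          F ((c' : ℂ) + (t : ℂ) * I) * (q : ℂ) ^ (-(n : ℂ) * ((c' : ℂ) + (t : ℂ) * I)))) ∧
    (∀ s : ℂ, a < s.re → s.re < b → qMellin q f s = F s) := by
  have hper' : ∀ z ∈ re ⁻¹' Ioo a b, F (z + 2 * π * I / Real.log q) = F z :=
    fun z hz => hper z hz.1 hz.2
  have hf' : ∀ c' ∈ Ioo a b, ∀ n : ℤ, f (q ^ n) = qMellinInv q F c' n := fun c' hc' n =>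
    (hf n).trans (qMellinInv_eq_of_mem_strip hq hq1.ne hF hper' ⟨hc, hcb⟩ hc' n)
  refine ⟨fun c' hac' hc'b => hf' c' ⟨hac', hc'b⟩, fun s has hsb => ?_⟩
  rw [qMellin, ← tsum_mul_left]
  simp_rw [hf' s.re ⟨has, hsb⟩]
  exact (hasSum_qMellin_qMellinInv hq hq1 hF hper' ⟨has, hsb⟩).tsum_eq

theorem qMellin_characterization (q a b : ℝ) (hq : 0 < q) (hq1 : q < 1) (hab : a < b)
    (F : ℂ → ℂ) (hF : DifferentiableOn ℂ F {s : ℂ | a < s.re ∧ s.re < b})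
    (hper : ∀ s : ℂ, a < s.re → s.re < b → F (s + 2 * Real.pi * I / Real.log q) = F s)
    (c : ℝ) (hc : a < c) (hcb : c < b) (f : ℝ → ℂ)
    (hf : ∀ n : ℤ, f (q ^ n) = (Real.log q : ℂ) / (2 * (Real.pi : ℂ) * I * (1 - (q : ℂ))) *
      (I * ∫ t in (-(Real.pi / Real.log q))..(Real.pi / Real.log q),
        F ((c : ℂ) + (t : ℂ) * I) * (q : ℂ) ^ (-(n : ℂ) * ((c : ℂ) + (t : ℂ) * I)))) :
    (∀ c' : ℝ, a < c' → c' < b → ∀ n : ℤ,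
      f (q ^ n) = (Real.log q : ℂ) / (2 * (Real.pi : ℂ) * I * (1 - (q : ℂ))) *
        (I * ∫ t in (-(Real.pi / Real.log q))..(Real.pi / Real.log q),
          F ((c' : ℂ) + (t : ℂ) * I) * (q : ℂ) ^ (-(n : ℂ) * ((c' : ℂ) + (t : ℂ) * I)))) ∧
    (∀ s : ℂ, a < s.re → s.re < b → qMellin q f s = F s) :=
  qMellin_characterization_general q a b hq hq1 F hF hper c hc hcb f hf
end

section
/- Mera approximation for 1/(1+x): for s with 0 < Re(s) < 1, the symmetric sums M_q^N(s) = -((1-q)/log q) ∑_{|n|≤N} π / sin(π(s + 2πin/log q)) converge absolutely and uniformly on compact sets in the strip as N → ∞, and the limit equals (1-q) ∑_{m∈ℤ} q^{ms}/(1+q^m). -/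
open Complex Filter

/-!
Write `t = log q < 0`. The `q`-Mellin sum is `(1 - q) ∑ₙ f(n)` with
`f(x) = e^{tsx} / (1 + e^{tx})`, and the substitution `x ↦ sigmoid x` turns the Fourier transform
of `f` into a Beta integral: `𝓕f(ξ) = |t|⁻¹ π / sin(π(s - 2πiξ/t))`. Since `|sin z| ≥ |sinh (Im z)|`,
this decays like `exp(-2π²|ξ|/|t|)`, uniformly for bounded `Im s`, and `f` decays exponentially
because `0 < Re s < 1`. Poisson summation identifies the two sums, and the same exponential bound
is a Weierstrass majorant for the symmetric partial sums.
-/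

open Real Asymptotics MeasureTheory Set
open scoped FourierTransform

lemma Complex.abs_sinh_im_le_norm_sin (z : ℂ) : |Real.sinh z.im| ≤ ‖sin z‖ := by
  have hsin : sin z = ((Real.sin z.re * Real.cosh z.im : ℝ) : ℂ) +
      ((Real.cos z.re * Real.sinh z.im : ℝ) : ℂ) * I := by
    rw [sin_eq]; push_cast; ring
  rw [← abs_norm, ← sq_le_sq, Complex.sq_norm, hsin, normSq_add_mul_I]
  nlinarith [Real.cosh_sq z.im, Real.sin_sq_add_cos_sq z.re, sq_nonneg (Real.sinh z.im),
    sq_nonneg (Real.sin z.re)]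

lemma Complex.norm_inv_sin_le {z : ℂ} (hz : 1 ≤ |z.im|) : ‖(sin z)⁻¹‖ ≤ 4 * rexp (-|z.im|) := by
  set y := |z.im|
  have hexp : 2 ≤ rexp y * rexp y := by
    rw [← Real.exp_add]; linarith [Real.add_one_le_exp (y + y)]
  have hsin : rexp y / 4 ≤ ‖sin z‖ := by
    refine le_trans ?_ (abs_sinh_im_le_norm_sin z)
    rw [Real.abs_sinh, Real.sinh_eq, Real.exp_neg]
    have := Real.exp_pos y
    field_simp
    nlinarith
  rw [norm_inv, Real.exp_neg]
  calc ‖sin z‖⁻¹ ≤ (rexp y / 4)⁻¹ := inv_anti₀ (by positivity) hsin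
    _ = 4 * (rexp y)⁻¹ := by ring

lemma eventually_norm_pi_div_sin_shift_le {t : ℝ} (ht : t ≠ 0) (M : ℝ) :
    ∀ᶠ ξ : ℝ in cocompact ℝ, ∀ s : ℂ, |s.im| ≤ M →
      ‖(π : ℂ) / sin (π * (s + 2 * π * I * ξ / t))‖ ≤
        4 * π * rexp (π * M) * rexp (-(2 * π ^ 2 / |t| * |ξ|)) := by
  set r := 2 * π ^ 2 / |t|
  have hr : 0 < r := by positivity
  filter_upwards [tendsto_norm_cocompact_atTop.eventually
    (eventually_ge_atTop ((π * M + 1) / r))] with ξ hξ s hs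
  rw [Real.norm_eq_abs, div_le_iff₀ hr] at hξ
  set z : ℂ := π * (s + 2 * π * I * ξ / t)
  have hz : z.im = π * s.im + 2 * π ^ 2 * ξ / t := by
    have : 2 * π * I * ξ / t = ((2 * π * ξ / t : ℝ) : ℂ) * I := by push_cast; ring
    simp only [z, this, mul_im, add_im, add_re, ofReal_re, ofReal_im, mul_re, I_re, I_im]
    ring
  have hlow : r * |ξ| - π * M ≤ |z.im| := by
    have h1 : |π * s.im| ≤ π * M := by
      rw [abs_mul, abs_of_pos pi_pos]; exact mul_le_mul_of_nonneg_left hs pi_pos.le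
    have h2 : |2 * π ^ 2 * ξ / t| = r * |ξ| := by
      rw [abs_div, abs_mul, abs_of_pos (by positivity : 0 < 2 * π ^ 2)]; ring
    have h3 := abs_sub (z.im) (π * s.im)
    rw [hz, add_sub_cancel_left, h2] at h3
    rw [hz]; linarith
  rw [div_eq_mul_inv, norm_mul, norm_real, Real.norm_of_nonneg pi_pos.le]
  calc π * ‖(sin z)⁻¹‖ ≤ π * (4 * rexp (-|z.im|)) := by
        gcongr; exact norm_inv_sin_le (by linarith)
    _ ≤ π * (4 * rexp (π * M + -(r * |ξ|))) := by gcongr; linarith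
    _ = 4 * π * rexp (π * M) * rexp (-(r * |ξ|)) := by rw [Real.exp_add]; ring

lemma isBigO_exp_neg_mul_abs_rpow {c : ℝ} (hc : 0 < c) (b : ℝ) :
    (fun x : ℝ => rexp (-(c * |x|))) =O[cocompact ℝ] (|·| ^ b) := by
  have := (isLittleO_exp_neg_mul_rpow_atTop hc b).isBigO.comp_tendsto
    (tendsto_norm_cocompact_atTop (E := ℝ))
  simp only [Function.comp_def, neg_mul] at this
  exact this

lemma summable_exp_neg_mul_abs_int {c : ℝ} (hc : 0 < c) :
    Summable fun n : ℤ => rexp (-(c * |(n : ℝ)|)) :=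
  summable_of_isBigO (Real.summable_abs_int_rpow one_lt_two)
    ((isBigO_exp_neg_mul_abs_rpow hc (-2)).comp_tendsto Int.tendsto_coe_cofinite)

lemma summable_norm_pi_div_sin_shift {t : ℝ} (ht : t ≠ 0) (s : ℂ) :
    Summable fun n : ℤ => ‖(π : ℂ) / sin (π * (s + 2 * π * I * n / t))‖ := by
  have hr : 0 < 2 * π ^ 2 / |t| := by positivity
  refine .of_norm_bounded_eventually
    ((summable_exp_neg_mul_abs_int hr).mul_left (4 * π * rexp (π * |s.im|))) ?_
  filter_upwards [Int.tendsto_coe_cofinite.eventually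
    (eventually_norm_pi_div_sin_shift_le ht |s.im|)] with n hn
  simpa using hn s le_rfl

lemma tendstoUniformlyOn_sum_Icc_neg {β F : Type*} [NormedAddCommGroup F] [CompleteSpace F]
    {f : ℤ → β → F} {u : ℤ → ℝ} (hu : Summable u) {K : Set β}
    (hfu : ∀ᶠ n in cofinite, ∀ x ∈ K, ‖f n x‖ ≤ u n) :
    TendstoUniformlyOn (fun (N : ℕ) x => ∑ n ∈ Finset.Icc (-(N : ℤ)) N, f n x)
      (fun x => ∑' n, f n x) atTop K := fun v hv =>
  Finset.tendsto_Icc_neg.eventually (tendstoUniformlyOn_tsum_of_cofinite_eventually hu hfu v hv)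

-- The Mellin integrand `x ^ w / (1 + x) · dx / x` in the coordinate `x = e ^ y`.
noncomputable def expMulDivOneAddExp (w : ℂ) (y : ℝ) : ℂ := cexp (w * y) / (1 + cexp y)

lemma one_add_cexp_ofReal (y : ℝ) : 1 + cexp y = ((1 + rexp y : ℝ) : ℂ) := by
  push_cast [ofReal_exp]; rfl

lemma continuous_expMulDivOneAddExp (w : ℂ) : Continuous (expMulDivOneAddExp w) := by
  refine .div (by fun_prop) (by fun_prop) fun y => ?_
  rw [one_add_cexp_ofReal]
  exact ofReal_ne_zero.2 (by positivity)

lemma norm_expMulDivOneAddExp_le (w : ℂ) (y : ℝ) :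
    ‖expMulDivOneAddExp w y‖ ≤ rexp (-(min w.re (1 - w.re) * |y|)) := by
  rw [expMulDivOneAddExp, norm_div, norm_exp, re_mul_ofReal, one_add_cexp_ofReal, norm_real,
    Real.norm_of_nonneg (by positivity)]
  rcases le_total 0 y with hy | hy
  · calc rexp (w.re * y) / (1 + rexp y) ≤ rexp (w.re * y) / rexp y :=
          div_le_div_of_nonneg_left (by positivity) (by positivity) (by linarith)
      _ = rexp ((w.re - 1) * y) := by rw [← Real.exp_sub]; ring_nf
      _ ≤ _ := by
          rw [abs_of_nonneg hy]; gcongr; nlinarith [min_le_right w.re (1 - w.re)]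
  · calc rexp (w.re * y) / (1 + rexp y) ≤ rexp (w.re * y) :=
          div_le_self (by positivity) (by linarith [Real.exp_pos y])
      _ ≤ _ := by
          rw [abs_of_nonpos hy]; gcongr; nlinarith [min_le_left w.re (1 - w.re)]

lemma expMulDivOneAddExp_eq_abs_deriv_sigmoid_smul (w : ℂ) (y : ℝ) :
    expMulDivOneAddExp w y = |Real.sigmoid y * (1 - Real.sigmoid y)| •
      ((Real.sigmoid y : ℂ) ^ (w - 1) * (1 - (Real.sigmoid y : ℂ)) ^ (1 - w - 1)) := by
  set a := Real.sigmoid y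
  have ha : 0 < a := Real.sigmoid_pos y
  have h1a : 1 - a = a * rexp (-y) := by rw [Real.sigmoid_mul_rexp_neg, Real.sigmoid_neg]
  have hcpow : ∀ {x : ℝ}, 0 < x → ∀ u : ℂ, (x : ℂ) ^ u = cexp (Real.log x * u) := fun hx u => by
    rw [cpow_def_of_ne_zero (ofReal_ne_zero.2 hx.ne'), ofReal_log hx.le]
  have hexp : cexp (Real.log a * (w - 1) + Real.log (a * rexp (-y)) * (1 - w - 1)) =
      cexp (w * y) / a := by
    rw [Real.log_mul ha.ne' (Real.exp_pos _).ne', Real.log_exp,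
      show (Real.log a * (w - 1) + ↑(Real.log a + -y) * (1 - w - 1) : ℂ) = w * y - Real.log a by
        push_cast; ring, Complex.exp_sub, ← ofReal_exp, Real.exp_log ha]
  rw [show (1 : ℂ) - a = ((a * rexp (-y) : ℝ) : ℂ) by rw [← h1a]; push_cast; rfl,
    hcpow ha, hcpow (by positivity), ← Complex.exp_add, hexp,
    abs_of_pos (mul_pos ha (by linarith [Real.sigmoid_lt_one y])), real_smul,
    expMulDivOneAddExp, one_add_cexp_ofReal, ← Real.sigmoid_neg, Real.sigmoid_def, neg_neg]
  have hden : ((1 + rexp y : ℝ) : ℂ) ≠ 0 := ofReal_ne_zero.2 (by positivity)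
  have ha' : (a : ℂ) ≠ 0 := ofReal_ne_zero.2 ha.ne'
  rw [ofReal_mul, ofReal_inv]
  field_simp

-- Substitute `x = sigmoid y` in the Beta integral `B(w, 1 - w) = Γ(w) Γ(1 - w)`.
lemma integral_expMulDivOneAddExp {w : ℂ} (h0 : 0 < w.re) (h1 : w.re < 1) :
    ∫ y : ℝ, expMulDivOneAddExp w y = π / sin (π * w) := by
  have hbeta : π / sin (π * w) = betaIntegral w (1 - w) := by
    have := Gamma_mul_Gamma_eq_betaIntegral h0 (by simpa using h1 : 0 < (1 - w).re)
    rw [add_sub_cancel, Complex.Gamma_one, one_mul] at this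
    rw [← this, Complex.Gamma_mul_Gamma_one_sub]
  have hsubst := integral_image_eq_integral_abs_deriv_smul MeasurableSet.univ
    (fun y _ => (Real.hasDerivAt_sigmoid y).hasDerivWithinAt) Real.sigmoid_injective.injOn
    (fun x : ℝ => (x : ℂ) ^ (w - 1) * (1 - (x : ℂ)) ^ (1 - w - 1))
  rw [image_univ, Real.range_sigmoid, Measure.restrict_univ] at hsubst
  rw [hbeta, betaIntegral, intervalIntegral.integral_of_le zero_le_one,
    integral_Ioc_eq_integral_Ioo, hsubst]
  exact integral_congr_ae (.of_forall (expMulDivOneAddExp_eq_abs_deriv_sigmoid_smul w))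

lemma fourier_expMulDivOneAddExp_comp_mul {t : ℝ} (ht : t ≠ 0) {w : ℂ} (h0 : 0 < w.re)
    (h1 : w.re < 1) (ξ : ℝ) :
    𝓕 (fun x : ℝ => expMulDivOneAddExp w (t * x)) ξ =
      |t|⁻¹ * (π / sin (π * (w + 2 * π * I * (-ξ : ℝ) / t))) := by
  set w' := w + 2 * π * I * (-ξ : ℝ) / t
  have hre : w'.re = w.re := by simp [w']
  have hmod : ∀ x : ℝ, cexp (↑(-2 * π * x * ξ) * I) • expMulDivOneAddExp w (t * x) =
      expMulDivOneAddExp w' (t * x) := by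
    intro x
    have htc : (t : ℂ) ≠ 0 := ofReal_ne_zero.2 ht
    simp only [expMulDivOneAddExp, smul_eq_mul, w', mul_div_assoc', ← Complex.exp_add]
    congr 2
    push_cast
    field_simp
    ring
  rw [Real.fourier_real_eq_integral_exp_smul]
  simp_rw [hmod]
  rw [Measure.integral_comp_mul_left (expMulDivOneAddExp w'),
    integral_expMulDivOneAddExp (hre ▸ h0) (hre ▸ h1), abs_inv, real_smul]

lemma tsum_expMulDivOneAddExp_comp_mul {t : ℝ} (ht : t ≠ 0) {w : ℂ} (h0 : 0 < w.re)
    (h1 : w.re < 1) :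
    ∑' n : ℤ, expMulDivOneAddExp w (t * n) =
      |t|⁻¹ * ∑' n : ℤ, (π : ℂ) / sin (π * (w + 2 * π * I * n / t)) := by
  set f := fun x : ℝ => expMulDivOneAddExp w (t * x)
  have hm : 0 < min w.re (1 - w.re) * |t| := mul_pos (lt_min h0 (by linarith)) (abs_pos.2 ht)
  have hf : f =O[cocompact ℝ] (|·| ^ (-2 : ℝ)) := by
    refine (isBigO_of_le' (c := 1) _ fun x => ?_).trans (isBigO_exp_neg_mul_abs_rpow hm _)
    rw [one_mul, Real.norm_of_nonneg (Real.exp_pos _).le, mul_assoc, ← abs_mul]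
    exact norm_expMulDivOneAddExp_le w (t * x)
  have hr : 0 < 2 * π ^ 2 / |t| := by positivity
  have hFf : 𝓕 f =O[cocompact ℝ] (|·| ^ (-2 : ℝ)) := by
    refine (IsBigO.of_bound (|t|⁻¹ * (4 * π * rexp (π * |w.im|))) ?_).trans
      (isBigO_exp_neg_mul_abs_rpow hr _)
    filter_upwards [(Homeomorph.neg ℝ).isClosedEmbedding.tendsto_cocompact.eventually
      (eventually_norm_pi_div_sin_shift_le ht |w.im|)] with ξ hξ
    have hξ' := hξ w le_rfl
    simp only [Homeomorph.coe_neg, abs_neg] at hξ'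
    rw [fourier_expMulDivOneAddExp_comp_mul ht h0 h1, norm_mul, norm_real,
      Real.norm_of_nonneg (Real.exp_pos _).le, Real.norm_of_nonneg (by positivity)]
    exact (mul_le_mul_of_nonneg_left hξ' (by positivity)).trans_eq (by ring)
  have hcont : Continuous f := (continuous_expMulDivOneAddExp w).comp (continuous_const_mul t)
  have hpoisson := Real.tsum_eq_tsum_fourier_of_rpow_decay hcont one_lt_two hf hFf 0
  simp only [zero_add, QuotientAddGroup.mk_zero, fourier_eval_zero, mul_one] at hpoisson
  rw [hpoisson, ← tsum_mul_left, ← (Equiv.neg ℤ).tsum_eq]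
  refine tsum_congr fun n => (fourier_expMulDivOneAddExp_comp_mul ht h0 h1 _).trans ?_
  simp

lemma qMellin_one_add_inv {q : ℝ} (hq : 0 < q) (hq1 : q < 1) {s : ℂ} (h0 : 0 < s.re)
    (h1 : s.re < 1) :
    qMellin q (fun x => 1 / (1 + (x : ℂ))) s = -((1 : ℂ) - q) / Real.log q *
      ∑' n : ℤ, (π : ℂ) / sin (π * (s + 2 * π * I * n / Real.log q)) := by
  have ht : Real.log q < 0 := Real.log_neg hq hq1
  have hterm (n : ℤ) : 1 / (1 + ((q ^ n : ℝ) : ℂ)) * (q : ℂ) ^ ((n : ℂ) * s) =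
      expMulDivOneAddExp s (Real.log q * n) := by
    rw [ofReal_zpow, ← cpow_intCast]
    simp only [cpow_def_of_ne_zero (ofReal_ne_zero.2 hq.ne'), ← ofReal_log hq.le,
      expMulDivOneAddExp]
    push_cast
    ring_nf
  rw [qMellin, tsum_congr hterm, tsum_expMulDivOneAddExp_comp_mul ht.ne h0 h1, ← mul_assoc,
    abs_of_neg ht]
  congr 1
  have htc : (Real.log q : ℂ) ≠ 0 := ofReal_ne_zero.2 ht.ne
  push_cast
  field_simp

theorem mera_one_add_inv (q : ℝ) (hq : 0 < q) (hq1 : q < 1) :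
    (∀ s : ℂ, 0 < s.re → s.re < 1 →
      Summable (fun n : ℤ =>
        ‖(Real.pi : ℂ) / Complex.sin ((Real.pi : ℂ) * (s + 2 * Real.pi * I * n / Real.log q))‖)) ∧
    (∀ K : Set ℂ, K ⊆ {s : ℂ | 0 < s.re ∧ s.re < 1} → IsCompact K →
      TendstoUniformlyOn
        (fun (N : ℕ) (s : ℂ) => -((1 : ℂ) - (q : ℂ)) / (Real.log q : ℂ) *
          ∑ n ∈ Finset.Icc (-(N : ℤ)) (N : ℤ),
            (Real.pi : ℂ) / Complex.sin ((Real.pi : ℂ) * (s + 2 * Real.pi * I * n / Real.log q)))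
        (fun s => qMellin q (fun x => 1 / (1 + (x : ℂ))) s) atTop K) := by
  have ht : Real.log q ≠ 0 := (Real.log_neg hq hq1).ne
  refine ⟨fun s _ _ => summable_norm_pi_div_sin_shift ht s, fun K hK hKc => ?_⟩
  obtain ⟨M, hM⟩ := hKc.isBounded.exists_norm_le
  set c : ℂ := -((1 : ℂ) - q) / Real.log q
  have hr : 0 < 2 * π ^ 2 / |Real.log q| := by positivity
  have hunif := tendstoUniformlyOn_sum_Icc_neg
    (f := fun n s => c * ((π : ℂ) / sin (π * (s + 2 * π * I * n / Real.log q))))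
    ((summable_exp_neg_mul_abs_int hr).mul_left (‖c‖ * (4 * π * rexp (π * M)))) (K := K) ?_
  · refine (hunif.congr (.of_forall fun N s _ => ?_)).congr_right fun s hs => ?_
    · simp only [Finset.mul_sum]
    · exact tsum_mul_left.trans (qMellin_one_add_inv hq hq1 (hK hs).1 (hK hs).2).symm
  filter_upwards [Int.tendsto_coe_cofinite.eventually
    (eventually_norm_pi_div_sin_shift_le ht M)] with n hn s hs
  rw [norm_mul, mul_assoc ‖c‖]
  gcongr
  simpa using hn s ((abs_im_le_norm s).trans (hM s hs))
end

section
/- The residues of ψ(s) = Γ_q(s)Γ_q(1-s)φ(-s)x^{-s} at its simple poles s = -n (n = 0,1,2,...) are Res(ψ,-n) = ((1-q)/log q) · q^{n(n+1)/2} (-1)^{n+1} φ(n) x^n, for any function φ analytic at the points n and any x > 0. -/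
open Complex Filter

/-! Splitting off the first `n + 1` factors of `(q^s; q)_∞` gives
`Γ_q(s) = R(s) / (1 - q^(s+n))` with `R = qGammaReg q n` continuous at `-n`. Since
`1 - q^(s+n)` vanishes at `-n` with derivative `-log q`,
`(s + n) ψ(s) → -(log q)⁻¹ R(-n) Γ_q(n+1) φ(n) xⁿ`. Finally `Γ_q(n+1) = (q;q)_n / (1-q)ⁿ` and
`(q⁻ⁿ; q)_n = (-1)ⁿ q^(-n(n+1)/2) (q;q)_n`, which produce the sign and the power of `q`. -/

open Topology

section qPochhammer

variable {q : ℝ}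

lemma norm_mul_ofReal_pow (a : ℂ) (k : ℕ) : ‖a * (q : ℂ) ^ k‖ = ‖a‖ * |q| ^ k := by
  rw [norm_mul, norm_pow, norm_real, Real.norm_eq_abs]

lemma summable_norm_mul_pow (hq : |q| < 1) (a : ℂ) :
    Summable fun k : ℕ => ‖a * (q : ℂ) ^ k‖ := by
  simpa only [norm_mul_ofReal_pow] using
    (summable_geometric_of_lt_one (abs_nonneg q) hq).mul_left ‖a‖

lemma multipliable_one_sub_mul_pow (hq : |q| < 1) (a : ℂ) :
    Multipliable fun k : ℕ => 1 - a * (q : ℂ) ^ k := by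
  simp only [sub_eq_add_neg]
  exact multipliable_one_add_of_summable
    (by simpa only [norm_neg] using summable_norm_mul_pow hq a)

lemma qPochInf_eq_qPoch_mul (hq : |q| < 1) (a : ℂ) (n : ℕ) :
    qPochInf a q = qPoch a q n * qPochInf (a * (q : ℂ) ^ n) q := by
  have hshift (k : ℕ) : a * (q : ℂ) ^ (k + n) = a * (q : ℂ) ^ n * (q : ℂ) ^ k := by ring
  have htail : Multipliable fun k : ℕ => 1 - a * (q : ℂ) ^ (k + n) := by
    simpa only [hshift] using multipliable_one_sub_mul_pow hq (a * (q : ℂ) ^ n)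
  unfold qPochInf qPoch
  rw [← htail.prod_mul_tprod_nat_mul' (f := fun k => 1 - a * (q : ℂ) ^ k)]
  simp only [hshift]

lemma one_sub_mul_pow_ne_zero (hq : |q| ≤ 1) {a : ℂ} (ha : ‖a‖ < 1) (k : ℕ) :
    1 - a * (q : ℂ) ^ k ≠ 0 := by
  rw [sub_ne_zero]
  refine fun h => (norm_one (α := ℂ)).not_lt ?_
  rw [h, norm_mul_ofReal_pow]
  exact mul_lt_one_of_nonneg_of_lt_one_left (norm_nonneg a) ha (pow_le_one₀ (abs_nonneg q) hq)

lemma qPoch_ne_zero (hq : |q| ≤ 1) {a : ℂ} (ha : ‖a‖ < 1) (n : ℕ) : qPoch a q n ≠ 0 :=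
  Finset.prod_ne_zero_iff.2 fun k _ => one_sub_mul_pow_ne_zero hq ha k

lemma qPochInf_ne_zero (hq : |q| < 1) {a : ℂ} (ha : ‖a‖ < 1) : qPochInf a q ≠ 0 := by
  have hfactor (k : ℕ) : 1 + -(a * (q : ℂ) ^ k) ≠ 0 := by
    rw [← sub_eq_add_neg]
    exact one_sub_mul_pow_ne_zero hq.le ha k
  simpa only [qPochInf, sub_eq_add_neg] using
    tprod_one_add_ne_zero_of_summable hfactor
      (by simpa only [norm_neg] using summable_norm_mul_pow hq a)

lemma continuous_qPochInf (hq : |q| < 1) : Continuous fun a : ℂ => qPochInf a q := by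
  refine continuous_iff_continuousAt.2 fun a₀ => ?_
  have hbound : ∀ᶠ a in 𝓝 a₀, ∀ k : ℕ, ‖-(a * (q : ℂ) ^ k)‖ ≤ (‖a₀‖ + 1) * |q| ^ k := by
    filter_upwards [Metric.closedBall_mem_nhds a₀ one_pos] with a ha k
    rw [norm_neg, norm_mul_ofReal_pow]
    gcongr
    have := mem_closedBall_iff_norm.1 ha
    linarith [norm_le_norm_add_norm_sub' a a₀]
  have hlim : Tendsto (fun a => ∏' k : ℕ, (1 + -(a * (q : ℂ) ^ k))) (𝓝 a₀)
      (𝓝 (∏' k : ℕ, (1 + -(a₀ * (q : ℂ) ^ k)))) :=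
    tendsto_tprod_one_add_of_dominated_convergence
      ((summable_geometric_of_lt_one (abs_nonneg q) hq).mul_left _)
      (fun k => ((continuous_id.mul continuous_const).neg.tendsto a₀)) hbound
  simpa only [ContinuousAt, qPochInf, sub_eq_add_neg] using hlim

lemma qPoch_succ (a : ℂ) (n : ℕ) : qPoch a q (n + 1) = qPoch a q n * (1 - a * (q : ℂ) ^ n) :=
  Finset.prod_range_succ _ _

lemma sum_range_add_one_eq (n : ℕ) : ∑ j ∈ Finset.range n, (j + 1) = n * (n + 1) / 2 := by
  have h := Finset.sum_range_succ' (fun i => i) n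
  rw [Finset.sum_range_id, add_zero] at h
  rw [← h, Nat.add_sub_cancel, mul_comm]

lemma qPoch_inv_pow (hq : q ≠ 0) (n : ℕ) :
    qPoch ((q : ℂ) ^ n)⁻¹ q n = (-1) ^ n * ((q : ℂ) ^ (n * (n + 1) / 2))⁻¹ * qPoch q q n := by
  have hq' : (q : ℂ) ≠ 0 := ofReal_ne_zero.2 hq
  have hfactor (j : ℕ) (hj : j < n) : 1 - ((q : ℂ) ^ n)⁻¹ * (q : ℂ) ^ (n - 1 - j) =
      (-1) * ((q : ℂ) ^ (j + 1))⁻¹ * (1 - (q : ℂ) * (q : ℂ) ^ j) := by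
    rw [show (q : ℂ) ^ n = (q : ℂ) ^ (n - 1 - j) * (q : ℂ) ^ (j + 1) by
      rw [← pow_add]; congr 1; omega]
    field_simp
    ring
  rw [qPoch, ← Finset.prod_range_reflect, Finset.prod_congr rfl fun j hj =>
    hfactor j (Finset.mem_range.1 hj), Finset.prod_mul_distrib, Finset.prod_mul_distrib,
    Finset.prod_const, Finset.card_range, Finset.prod_inv_distrib, Finset.prod_pow_eq_pow_sum,
    sum_range_add_one_eq, qPoch]

end qPochhammer

section qGamma

variable {q : ℝ}

lemma norm_ofReal_cpow_lt_one (hq : 0 < q) (hq1 : q < 1) {s : ℂ} (hs : 0 < s.re) :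
    ‖(q : ℂ) ^ s‖ < 1 := by
  rw [norm_cpow_eq_rpow_re_of_pos hq]
  exact Real.rpow_lt_one hq.le hq1 hs

lemma continuousAt_qGamma (hq : 0 < q) (hq1 : q < 1) {s : ℂ} (hs : 0 < s.re) :
    ContinuousAt (qGamma q) s := by
  have habs : |q| < 1 := abs_lt.2 ⟨by linarith, hq1⟩
  have hq' : (q : ℂ) ≠ 0 := ofReal_ne_zero.2 hq.ne'
  have h1q : (1 : ℂ) - q ≠ 0 := sub_ne_zero.2 (by exact_mod_cast hq1.ne')
  have hden : ContinuousAt (fun s : ℂ => qPochInf ((q : ℂ) ^ s) q) s :=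
    (continuous_qPochInf habs).continuousAt.comp (continuousAt_const_cpow hq')
  have hden_ne := qPochInf_ne_zero habs (norm_ofReal_cpow_lt_one hq hq1 hs)
  exact (continuousAt_const.div hden hden_ne).mul
    ((continuousAt_const.sub continuousAt_id).const_cpow (Or.inl h1q))

lemma qGamma_natCast_add_one (hq : |q| < 1) (n : ℕ) : qGamma q (n + 1) = qFact q n := by
  have hpow : ‖(q : ℂ) ^ (n + 1)‖ < 1 := by
    rw [norm_pow, norm_real, Real.norm_eq_abs]
    exact pow_lt_one₀ (abs_nonneg q) hq n.succ_ne_zero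
  have hsplit := qPochInf_eq_qPoch_mul hq (q : ℂ) n
  rw [← pow_succ'] at hsplit
  rw [qGamma, qFact, show ((n : ℂ) + 1) = ((n + 1 : ℕ) : ℂ) by push_cast; ring, cpow_natCast,
    show (1 : ℂ) - ((n + 1 : ℕ) : ℂ) = -(n : ℂ) by push_cast; ring, cpow_neg, cpow_natCast,
    hsplit, mul_div_cancel_right₀ _ (qPochInf_ne_zero hq hpow), div_eq_mul_inv]

noncomputable def qGammaReg (q : ℝ) (n : ℕ) (s : ℂ) : ℂ :=
  qPochInf q q * (1 - (q : ℂ)) ^ (1 - s) /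
    (qPoch ((q : ℂ) ^ s) q n * qPochInf ((q : ℂ) ^ s * (q : ℂ) ^ (n + 1)) q)

lemma qGamma_eq_inv_mul_qGammaReg (hq : |q| < 1) (hq0 : q ≠ 0) (n : ℕ) (s : ℂ) :
    qGamma q s = (1 - (q : ℂ) ^ (s + n))⁻¹ * qGammaReg q n s := by
  rw [qGamma, qGammaReg, qPochInf_eq_qPoch_mul hq ((q : ℂ) ^ s) (n + 1), qPoch_succ,
    cpow_add _ _ (ofReal_ne_zero.2 hq0), cpow_natCast]
  simp only [div_eq_mul_inv, mul_inv]
  ring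

lemma qGammaReg_neg_natCast (hq : |q| < 1) (hq0 : q ≠ 0) (n : ℕ) :
    qGammaReg q n (-n) = (1 - (q : ℂ)) ^ (n + 1) / qPoch ((q : ℂ) ^ n)⁻¹ q n := by
  have hq' : (q : ℂ) ≠ 0 := ofReal_ne_zero.2 hq0
  have hnorm : ‖(q : ℂ)‖ < 1 := by rwa [norm_real, Real.norm_eq_abs]
  have hshift : ((q : ℂ) ^ n)⁻¹ * (q : ℂ) ^ (n + 1) = q := by
    rw [pow_succ, inv_mul_cancel_left₀ (pow_ne_zero n hq')]
  rw [qGammaReg, cpow_neg, cpow_natCast, hshift,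
    show (1 : ℂ) - -(n : ℂ) = ((n + 1 : ℕ) : ℂ) by push_cast; ring, cpow_natCast,
    mul_comm (qPoch _ q n), ← div_div, mul_div_cancel_left₀ _ (qPochInf_ne_zero hq hnorm)]

lemma qGammaReg_neg_natCast_mul_qGamma (hq : |q| < 1) (hq0 : q ≠ 0) (n : ℕ) :
    qGammaReg q n (-n) * qGamma q (n + 1) =
      (-1) ^ n * (q : ℂ) ^ (n * (n + 1) / 2) * (1 - q) := by
  have hq' : (q : ℂ) ≠ 0 := ofReal_ne_zero.2 hq0
  have h1q : (1 : ℂ) - q ≠ 0 := sub_ne_zero.2 (by exact_mod_cast (abs_lt.1 hq).2.ne')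
  have hP : qPoch q q n ≠ 0 := qPoch_ne_zero hq.le (by rwa [norm_real, Real.norm_eq_abs]) n
  rw [qGammaReg_neg_natCast hq hq0, qPoch_inv_pow hq0, qGamma_natCast_add_one hq, qFact]
  field_simp
  rw [← pow_mul, (Even.neg_one_pow ⟨n, by ring⟩ : (-1 : ℂ) ^ (n * 2) = 1)]
  ring

lemma continuousAt_qGammaReg (hq : 0 < q) (hq1 : q < 1) (n : ℕ) :
    ContinuousAt (qGammaReg q n) (-n) := by
  have habs : |q| < 1 := abs_lt.2 ⟨by linarith, hq1⟩
  have hq' : (q : ℂ) ≠ 0 := ofReal_ne_zero.2 hq.ne'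
  have hnorm : ‖(q : ℂ)‖ < 1 := by rwa [norm_real, Real.norm_eq_abs]
  have h1q : (1 : ℂ) - q ≠ 0 := sub_ne_zero.2 (by exact_mod_cast hq1.ne')
  have hcpow : Continuous fun s : ℂ => (q : ℂ) ^ s := continuous_id.const_cpow (Or.inl hq')
  have hshift : (q : ℂ) ^ (-(n : ℂ)) * (q : ℂ) ^ (n + 1) = q := by
    rw [cpow_neg, cpow_natCast, pow_succ, inv_mul_cancel_left₀ (pow_ne_zero n hq')]
  have hpoch : ContinuousAt (fun s : ℂ => qPoch ((q : ℂ) ^ s) q n) (-n) :=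
    (continuous_finsetProd _ fun _ _ =>
      continuous_const.sub (hcpow.mul continuous_const)).continuousAt
  have htail : ContinuousAt (fun s : ℂ => qPochInf ((q : ℂ) ^ s * (q : ℂ) ^ (n + 1)) q) (-n) :=
    (continuous_qPochInf habs).continuousAt.comp (hcpow.mul continuous_const).continuousAt
  have hpoch_ne : qPoch ((q : ℂ) ^ (-(n : ℂ))) q n ≠ 0 := by
    rw [cpow_neg, cpow_natCast, qPoch_inv_pow hq.ne']
    exact mul_ne_zero
      (mul_ne_zero (pow_ne_zero n (by norm_num)) (inv_ne_zero (pow_ne_zero _ hq')))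
      (qPoch_ne_zero habs.le hnorm n)
  have htail_ne : qPochInf ((q : ℂ) ^ (-(n : ℂ)) * (q : ℂ) ^ (n + 1)) q ≠ 0 := by
    rw [hshift]
    exact qPochInf_ne_zero habs hnorm
  have hnum : ContinuousAt (fun s : ℂ => qPochInf q q * (1 - (q : ℂ)) ^ (1 - s)) (-n) :=
    continuousAt_const.mul ((continuousAt_const.sub continuousAt_id).const_cpow (Or.inl h1q))
  exact hnum.div (hpoch.mul htail) (mul_ne_zero hpoch_ne htail_ne)

end qGamma

lemma tendsto_sub_div_of_hasDerivAt {𝕜 : Type*} [NontriviallyNormedField 𝕜] {g : 𝕜 → 𝕜}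
    {g' a : 𝕜} (hg : HasDerivAt g g' a) (ha : g a = 0) (hg' : g' ≠ 0) :
    Tendsto (fun s => (s - a) / g s) (𝓝[≠] a) (𝓝 g'⁻¹) :=
  ((hasDerivAt_iff_tendsto_slope.1 hg).inv₀ hg').congr fun s => by
    rw [slope_def_field, ha, sub_zero, inv_div]

lemma hasDerivAt_one_sub_cpow_add {b : ℂ} (hb : b ≠ 0) (c : ℂ) :
    HasDerivAt (fun s => 1 - b ^ (s + c)) (-log b) (-c) := by
  simpa using (((hasDerivAt_id (-c)).add_const c).const_cpow (Or.inl hb)).const_sub 1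

theorem residues_psi (q x : ℝ) (hq : 0 < q) (hq1 : q < 1) (hx : 0 < x)
    (φ : ℂ → ℂ) (hφ : ∀ n : ℕ, AnalyticAt ℂ φ (n : ℂ)) :
    ∀ n : ℕ, Tendsto
      (fun s : ℂ => (s + (n : ℂ)) * (qGamma q s * qGamma q (1 - s) * φ (-s) * (x : ℂ) ^ (-s)))
      (nhdsWithin (-(n : ℂ)) {(-(n : ℂ))}ᶜ)
      (nhds ((((1 - q) / Real.log q : ℝ) : ℂ) * (q : ℂ) ^ (n * (n + 1) / 2) *
        (-1 : ℂ) ^ (n + 1) * φ (n : ℂ) * (x : ℂ) ^ (n : ℕ))) := by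
  intro n
  have habs : |q| < 1 := abs_lt.2 ⟨by linarith, hq1⟩
  have hq' : (q : ℂ) ≠ 0 := ofReal_ne_zero.2 hq.ne'
  have hlog : log (q : ℂ) ≠ 0 := by
    rw [← ofReal_log hq.le]
    exact ofReal_ne_zero.2 (Real.log_neg hq hq1).ne
  set G : ℂ → ℂ := fun s => qGamma q (1 - s) * φ (-s) * (x : ℂ) ^ (-s)
  have hG : ContinuousAt G (-n) := by
    have hre : 0 < (1 - -(n : ℂ)).re := by
      rw [sub_neg_eq_add, add_re, one_re, natCast_re]
      positivity
    refine ((continuousAt_qGamma hq hq1 hre).comp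
      (continuousAt_const.sub continuousAt_id)).mul ?_ |>.mul ?_
    · exact (by simpa using (hφ n).continuousAt : ContinuousAt φ (-(-n))).comp continuousAt_neg
    · exact continuousAt_neg.const_cpow (Or.inl (ofReal_ne_zero.2 hx.ne'))
  have hpole := tendsto_sub_div_of_hasDerivAt (hasDerivAt_one_sub_cpow_add hq' n) (by simp)
    (neg_ne_zero.2 hlog)
  have hlim := hpole.mul (((continuousAt_qGammaReg hq hq1 n).mul hG).tendsto.mono_left
    nhdsWithin_le_nhds)
  have hvalue : (-log (q : ℂ))⁻¹ * (qGammaReg q n (-n) * G (-n)) =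
      (((1 - q) / Real.log q : ℝ) : ℂ) * (q : ℂ) ^ (n * (n + 1) / 2) *
        (-1 : ℂ) ^ (n + 1) * φ (n : ℂ) * (x : ℂ) ^ (n : ℕ) := by
    simp only [G, neg_neg, sub_neg_eq_add, add_comm (1 : ℂ), cpow_natCast, ← mul_assoc,
      qGammaReg_neg_natCast_mul_qGamma habs hq.ne']
    push_cast
    rw [ofReal_log hq.le]
    ring
  rw [← hvalue]
  refine hlim.congr fun s => ?_
  rw [Pi.mul_apply, qGamma_eq_inv_mul_qGammaReg habs hq.ne' n s, sub_neg_eq_add]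
  ring
end
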